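/- arXiv:1211.1731 — 3 statements merged into one kernel-verified Lean document; each statement's English description precedes it below -/
import Mathlib

section
/- Let B be a finitely generated free abelian group, let F ⊆ B be a finite subset, let σ ⊆ B ⊗ ℝ be the convex cone consisting of all nonnegative real linear combinations of the images of elements of F, let B_G ⊆ B be a subgroup, and let σ_G = σ ∩ (B_G ⊗ ℝ), the intersection of σ with the real span of B_G inside B ⊗ ℝ. Assume that the only group homomorphism s : B → ℤ whose ℝ-linear extension to B ⊗ ℝ is nonnegative at every point of σ and zero at every point of σ_G is the zero homomorphism. Then there exists f ∈ B_G whose image in B ⊗ ℝ lies in the topological interior of σ. -/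
/-!
Everything happens over `ℚ`, where Farkas' lemma holds for finite families. A rational functional
that is nonnegative on `F` and vanishes on `F`, or on `B_G`, becomes after clearing denominators an
integral one that is nonnegative on `σ` and vanishes on `σ_G`, hence is zero by hypothesis. So `F`
spans `ℚⁿ`, which makes every strictly positive combination of `F` an interior point of `σ`; and the
Stiemke alternative in `ℚⁿ ⧸ span_ℚ B_G` yields a strictly positive rational combination of `F`
lying in `span_ℚ B_G`, a multiple of which lies in `B_G`.
-/

open Finset Set Submodule

section Farkas

variable {K V : Type*} [Field K] [LinearOrder K] [IsStrictOrderedRing K] [AddCommGroup V]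
  [Module K V]

theorem exists_nonneg_sum_smul_eq_or_exists_dual_of_fin : ∀ (m : ℕ) (v : Fin m → V) (x : V),
    (∃ c : Fin m → K, (∀ i, 0 ≤ c i) ∧ ∑ i, c i • v i = x) ∨
      ∃ f : Module.Dual K V, (∀ i, 0 ≤ f (v i)) ∧ f x < 0
  | 0, v, x => by
    by_cases hx : x = 0
    · exact .inl ⟨0, fun _ => le_rfl, by simp [hx]⟩
    obtain ⟨f, hf⟩ : ∃ f : Module.Dual K V, f x ≠ 0 := by
      by_contra! h
      exact hx ((Module.forall_dual_apply_eq_zero_iff K x).1 h)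
    exact .inr ⟨-(f x)⁻¹ • f, finZeroElim, by simp [hf]⟩
  | m + 1, v, x => by
    rcases exists_nonneg_sum_smul_eq_or_exists_dual_of_fin m (Fin.tail v) x with
      ⟨c, hc, rfl⟩ | ⟨f, hf, hfx⟩
    · exact .inl ⟨Fin.cons 0 c, Fin.cases le_rfl hc, by simp [Fin.sum_univ_succ, Fin.tail]⟩
    by_cases ha : 0 ≤ f (v 0)
    · exact .inr ⟨f, Fin.cases ha hf, hfx⟩
    push Not at ha
    -- Fourier–Motzkin step: project the other generators along `v 0` onto `ker f`.
    set π : V →ₗ[K] V := LinearMap.id - (f (v 0))⁻¹ • f.smulRight (v 0)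
    have hπ : ∀ y, π y = y - (f y / f (v 0)) • v 0 := fun y => by
      simp [π, div_eq_inv_mul, smul_smul]
    rcases exists_nonneg_sum_smul_eq_or_exists_dual_of_fin m (π ∘ Fin.tail v) (π x) with
      ⟨c, hc, hcx⟩ | ⟨g, hg, hgx⟩
    · set y := ∑ i, c i • Fin.tail v i
      have hfy : 0 ≤ f y := by
        simp only [y, map_sum, map_smul, smul_eq_mul]
        exact Finset.sum_nonneg fun i _ => mul_nonneg (hc i) (hf i)
      have hxy : π x = π y := by simp [← hcx, y, map_sum]
      have hcoef : 0 ≤ (f x - f y) / f (v 0) := div_nonneg_of_nonpos (by linarith) ha.le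
      refine .inl ⟨Fin.cons ((f x - f y) / f (v 0)) c, Fin.cases hcoef hc, ?_⟩
      rw [hπ, hπ] at hxy
      rw [Fin.sum_univ_succ, Fin.cons_zero, sub_div, sub_smul]
      change _ + y = x
      linear_combination (norm := module) -hxy
    · refine .inr ⟨g ∘ₗ π, Fin.cases ?_ fun i => hg i, hgx⟩
      simp [hπ, ha.ne]

/-- **Farkas' lemma** for a finite family in a vector space over an ordered field. -/
theorem exists_nonneg_sum_smul_eq_or_exists_dual {ι : Type*} [Fintype ι] (v : ι → V) (x : V) :
    (∃ c : ι → K, (∀ i, 0 ≤ c i) ∧ ∑ i, c i • v i = x) ∨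
      ∃ f : Module.Dual K V, (∀ i, 0 ≤ f (v i)) ∧ f x < 0 := by
  let e := Fintype.equivFin ι
  rcases exists_nonneg_sum_smul_eq_or_exists_dual_of_fin (K := K) _ (v ∘ e.symm) x with
    ⟨c, hc, hcx⟩ | ⟨f, hf, hfx⟩
  · refine .inl ⟨c ∘ e, fun i => hc (e i), ?_⟩
    rw [← hcx, ← e.symm.sum_comp]
    simp
  · exact .inr ⟨f, fun i => by simpa using hf (e i), hfx⟩

theorem exists_pos_sum_smul_mem_of_forall_dual {ι : Type*} [Fintype ι] (v : ι → V)
    (U : Submodule K V)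
    (h : ∀ f : Module.Dual K V, (∀ u ∈ U, f u = 0) → (∀ i, 0 ≤ f (v i)) → ∀ i, f (v i) = 0) :
    ∃ c : ι → K, (∀ i, 0 < c i) ∧ ∑ i, c i • v i ∈ U := by
  rcases exists_nonneg_sum_smul_eq_or_exists_dual (K := K) (fun i => U.mkQ (v i))
      (-∑ i, U.mkQ (v i)) with ⟨d, hd, hdx⟩ | ⟨φ, hφ, hφx⟩
  · refine ⟨d + 1, fun i => by simpa using add_pos_of_nonneg_of_pos (hd i) one_pos, ?_⟩
    rw [← Submodule.Quotient.mk_eq_zero, ← U.mkQ_apply, map_sum]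
    simp only [Pi.add_apply, Pi.one_apply, add_smul, one_smul, map_add, map_smul,
      Finset.sum_add_distrib]
    rw [hdx, neg_add_cancel]
  · have hzero : ∀ i, φ (U.mkQ (v i)) = 0 :=
      h (φ ∘ₗ U.mkQ) (fun u hu => by simp [(Submodule.Quotient.mk_eq_zero U).2 hu]) hφ
    simp only [map_neg, map_sum, hzero, Finset.sum_const_zero, neg_zero, lt_irrefl] at hφx

end Farkas

section BaseChange

variable {R S ι : Type*} [CommSemiring R] [CommSemiring S] [Algebra R S] [Finite ι]

theorem span_range_algebraMap_comp_eq_top :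
    span S (range fun (w : ι → R) i => algebraMap R S (w i)) = ⊤ := by
  classical
  refine eq_top_iff.2 ((Pi.basisFun S ι).span_eq.ge.trans (span_mono ?_))
  rintro _ ⟨i, rfl⟩
  refine ⟨Pi.single i 1, funext fun j => ?_⟩
  rcases eq_or_ne j i with rfl | hj <;> simp [*]

theorem span_range_algebraMap_comp_eq_top_of_span_eq_top {κ : Type*} {v : κ → ι → R}
    (hv : span R (range v) = ⊤) :
    span S (range fun k i => algebraMap R S (v k i)) = ⊤ := by
  let J : (ι → R) →ₗ[R] ι → S := (Algebra.linearMap R S).compLeft ι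
  refine eq_top_iff.2 ((span_range_algebraMap_comp_eq_top (R := R)).ge.trans (span_le.2 ?_))
  rintro _ ⟨w, rfl⟩
  have hw : J w ∈ span R (J '' range v) := by
    rw [← Submodule.map_span, hv]
    exact mem_map_of_mem mem_top
  rw [← range_comp] at hw
  exact span_le_restrictScalars R S _ hw

end BaseChange

theorem exists_nat_smul_eq_of_mem_span_rat {M V : Type*} [AddCommGroup M] [AddCommGroup V]
    [Module ℚ V] (φ : M →+ V) (H : AddSubgroup M) {x : V} (hx : x ∈ span ℚ (φ '' H)) :
    ∃ N : ℕ, 0 < N ∧ ∃ g ∈ H, (N : ℚ) • x = φ g := by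
  obtain ⟨y, hy, z, rfl⟩ := (IsLocalization.mem_span_iff (nonZeroDivisors ℤ)).1 hx
  obtain ⟨g, hg, rfl⟩ : y ∈ H.map φ :=
    span_le (p := (H.map φ).toIntSubmodule).2 (by rintro _ ⟨g, hg, rfl⟩; exact ⟨g, hg, rfl⟩) hy
  have hz : (z : ℤ) ≠ 0 := nonZeroDivisors.coe_ne_zero z
  set x := IsLocalization.mk' ℚ (1 : ℤ) z • φ g
  have hzx : ((z : ℤ) : ℚ) • x = φ g := by
    rw [smul_smul, IsFractionRing.mk'_eq_div, map_one, algebraMap_int_eq, eq_intCast,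
      mul_one_div_cancel (by exact_mod_cast hz), one_smul]
  refine ⟨(z : ℤ).natAbs, Int.natAbs_pos.2 hz, ?_⟩
  rcases Int.natAbs_eq (z : ℤ) with h | h
  · refine ⟨g, hg, ?_⟩
    rwa [h, Int.cast_natCast] at hzx
  · refine ⟨-g, H.neg_mem hg, ?_⟩
    rw [h, Int.cast_neg, Int.cast_natCast, neg_smul] at hzx
    rw [map_neg, ← hzx, neg_neg]

theorem Module.Dual.exists_nat_mul_eq_dotProduct_intCast {ι : Type*} [Fintype ι] [DecidableEq ι]
    (f : Module.Dual ℚ (ι → ℚ)) :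
    ∃ N : ℕ, 0 < N ∧ ∃ z : ι → ℤ, ∀ x, N * f x = (fun i => (z i : ℚ)) ⬝ᵥ x := by
  let φ : (ι → ℤ) →+ ι → ℚ := (Int.castAddHom ℚ).compLeft ι
  have hspan : span ℚ (φ '' (⊤ : AddSubgroup (ι → ℤ))) = ⊤ := by
    rw [AddSubgroup.coe_top, image_univ]
    -- `φ` is `algebraMap ℤ ℚ` applied coordinatewise, definitionally.
    exact span_range_algebraMap_comp_eq_top
  obtain ⟨N, hN, z, -, hz⟩ :=
    exists_nat_smul_eq_of_mem_span_rat φ ⊤ (hspan ▸ mem_top (x := (dotProductEquiv ℚ ι).symm f))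
  refine ⟨N, hN, z, fun x => ?_⟩
  have hfx : (dotProductEquiv ℚ ι).symm f ⬝ᵥ x = f x :=
    LinearMap.congr_fun ((dotProductEquiv ℚ ι).apply_symm_apply f) x
  rw [← hfx, ← smul_eq_mul, ← smul_dotProduct, hz]
  rfl

theorem Module.Dual.eq_zero_of_forall_intCast {ι : Type*} [Fintype ι] [DecidableEq ι]
    {P A : Set (ι → ℤ)}
    (h : ∀ z : ι → ℤ, (∀ b ∈ P, 0 ≤ z ⬝ᵥ b) → (∀ a ∈ A, z ⬝ᵥ a = 0) → z = 0)
    {f : Module.Dual ℚ (ι → ℚ)} (hP : ∀ b ∈ P, 0 ≤ f fun i => (b i : ℚ))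
    (hA : ∀ a ∈ A, f (fun i => (a i : ℚ)) = 0) : f = 0 := by
  obtain ⟨N, hN, z, hz⟩ := f.exists_nat_mul_eq_dotProduct_intCast
  have hzb : ∀ b : ι → ℤ, ((z ⬝ᵥ b : ℤ) : ℚ) = N * f fun i => (b i : ℚ) := by
    simp [hz, dotProduct]
  have hN' : (0 : ℚ) < N := by exact_mod_cast hN
  have hz0 : z = 0 := h z
    (fun b hb => by exact_mod_cast (hzb b).trans_ge (mul_nonneg hN'.le (hP b hb)))
    (fun a ha => by exact_mod_cast (hA a ha ▸ hzb a).trans (mul_zero _))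
  refine LinearMap.ext fun x => ?_
  simpa [hz0, hN'.ne'] using hz x

section Cone

variable {α E : Type*} [AddCommGroup E] [Module ℝ E]

theorem setOf_nonneg_sum_smul_subset_span (F : Finset α) (v : α → E) :
    {x | ∃ c : α → ℝ, (∀ b, 0 ≤ c b) ∧ x = ∑ b ∈ F, c b • v b} ⊆ span ℝ (v '' F) := by
  rintro _ ⟨c, -, rfl⟩
  exact sum_mem fun b hb => smul_mem _ _ (subset_span (mem_image_of_mem _ hb))

theorem setOf_nonneg_sum_smul_subtype_subset (F : Finset α) (v : α → E) :
    {x | ∃ d : F → ℝ, (∀ b, 0 ≤ d b) ∧ ∑ b, d b • v b = x} ⊆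
      {x | ∃ c : α → ℝ, (∀ b, 0 ≤ c b) ∧ x = ∑ b ∈ F, c b • v b} := by
  classical
  rintro _ ⟨d, hd, rfl⟩
  refine ⟨fun b => if hb : b ∈ F then d ⟨b, hb⟩ else 0, fun b => ?_, ?_⟩
  · dsimp only
    split_ifs <;> simp [hd]
  · rw [← Finset.sum_coe_sort F]
    simp

end Cone

theorem sum_smul_mem_interior_of_span_eq_top {ι E : Type*} [Fintype ι] [AddCommGroup E]
    [Module ℝ E] [TopologicalSpace E] [IsTopologicalAddGroup E] [ContinuousSMul ℝ E] [T2Space E]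
    [FiniteDimensional ℝ E] (v : ι → E) (hv : span ℝ (range v) = ⊤) {c : ι → ℝ}
    (hc : ∀ i, 0 < c i) :
    ∑ i, c i • v i ∈ interior {x | ∃ d : ι → ℝ, (∀ i, 0 ≤ d i) ∧ ∑ i, d i • v i = x} := by
  let T := Fintype.linearCombination ℝ v
  have hT : IsOpenMap T := LinearMap.isOpenMap_of_finiteDimensional T <| by
    rw [← LinearMap.range_eq_top, Fintype.range_linearCombination, hv]
  have hpos : IsOpen {d : ι → ℝ | ∀ i, 0 < d i} := by
    simpa only [Set.ofPred_forall] using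
      isOpen_iInter_of_finite fun i => isOpen_lt continuous_const (continuous_apply i)
  refine interior_maximal ?_ (hT _ hpos) ⟨c, hc, Fintype.linearCombination_apply ℝ v c⟩
  rintro _ ⟨d, hd, rfl⟩
  exact ⟨d, fun i => (hd i).le, (Fintype.linearCombination_apply ℝ v d).symm⟩

theorem intCast_mem_interior_of_sum_smul_eq {ι : Type*} [Fintype ι] {F : Finset (ι → ℤ)}
    (hspan : span ℚ (range fun b : F => fun i => (b.1 i : ℚ)) = ⊤) {c : F → ℚ}
    (hc : ∀ b, 0 < c b) {g : ι → ℤ}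
    (hg : ∑ b, c b • (fun i => (b.1 i : ℚ)) = fun i => (g i : ℚ)) :
    (fun i => (g i : ℝ)) ∈
      interior {x | ∃ c : (ι → ℤ) → ℝ, (∀ b, 0 ≤ c b) ∧ x = ∑ b ∈ F, c b • fun i => (b i : ℝ)} := by
  have hgc : (fun i => (g i : ℝ)) = ∑ b : F, (c b : ℝ) • fun i => (b.1 i : ℝ) := by
    funext i
    have := congrArg (fun q : ℚ => (q : ℝ)) (congrFun hg i)
    simp only [Finset.sum_apply, Pi.smul_apply, smul_eq_mul, Rat.cast_sum, Rat.cast_mul,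
      Rat.cast_intCast] at this
    simp [← this]
  have hspanR : span ℝ (range fun b : F => fun i => (b.1 i : ℝ)) = ⊤ := by
    simpa using span_range_algebraMap_comp_eq_top_of_span_eq_top (S := ℝ) hspan
  rw [hgc]
  exact interior_mono (setOf_nonneg_sum_smul_subtype_subset F _)
    (sum_smul_mem_interior_of_span_eq_top _ hspanR fun b => Rat.cast_pos.2 (hc b))

theorem eq_zero_of_dotProduct_nonneg_of_dotProduct_eq_zero {n : ℕ} {F : Finset (Fin n → ℤ)}
    {σ σG : Set (Fin n → ℝ)}
    (hσ : σ = {x | ∃ c : (Fin n → ℤ) → ℝ, (∀ b, 0 ≤ c b) ∧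
        x = ∑ b ∈ F, c b • (fun i => ((b i : ℝ)))})
    (hdual : ∀ (s : (Fin n → ℤ) →+ ℤ) (S : (Fin n → ℝ) →ₗ[ℝ] ℝ),
        (∀ b : Fin n → ℤ, S (fun i => (b i : ℝ)) = (s b : ℝ)) →
        (∀ x ∈ σ, 0 ≤ S x) → (∀ x ∈ σG, S x = 0) → s = 0)
    {A : Set (Fin n → ℤ)} (hA : σG ⊆ span ℝ ((fun b : Fin n → ℤ => fun i => (b i : ℝ)) '' A))
    {z : Fin n → ℤ} (hF : ∀ b ∈ F, 0 ≤ z ⬝ᵥ b) (hzA : ∀ a ∈ A, z ⬝ᵥ a = 0) : z = 0 := by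
  let S := dotProductEquiv ℝ (Fin n) fun i => (z i : ℝ)
  have hS : ∀ b : Fin n → ℤ, S (fun i => (b i : ℝ)) = ((z ⬝ᵥ b : ℤ) : ℝ) := by
    simp [S, dotProduct]
  have hs := hdual (dotProductEquiv ℤ (Fin n) z).toAddMonoidHom S (by simpa using hS) ?_ ?_
  · ext i
    simpa using DFunLike.congr_fun hs (Pi.single i 1)
  · rw [hσ]
    rintro _ ⟨c, hc, rfl⟩
    simp only [map_sum, map_smul, hS, smul_eq_mul]
    exact Finset.sum_nonneg fun b hb => mul_nonneg (hc b) (by exact_mod_cast hF b hb)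
  · intro x hx
    refine (span_le (p := LinearMap.ker S)).2 ?_ (hA hx)
    rintro _ ⟨a, ha, rfl⟩
    simp [hS, hzA a ha]

/-- Let `B = ℤⁿ` be a finitely generated free abelian group, `F ⊆ B` a finite subset,
`σ ⊆ B ⊗ ℝ = ℝⁿ` the convex cone of all nonnegative real linear combinations of the
images of elements of `F`, `B_G ⊆ B` a subgroup and `σ_G = σ ∩ (B_G ⊗ ℝ)` the
intersection of `σ` with the real span of `B_G`.  If the only group homomorphism
`s : B → ℤ` whose `ℝ`-linear extension is nonnegative on `σ` and vanishes on `σ_G`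
is the zero homomorphism, then `B_G` contains an element whose image lies in the
topological interior of `σ`. -/
theorem exists_interior_point_of_continuity
    (n : ℕ) (F : Finset (Fin n → ℤ)) (BG : AddSubgroup (Fin n → ℤ))
    (σ : Set (Fin n → ℝ))
    (hσ : σ = {x | ∃ c : (Fin n → ℤ) → ℝ, (∀ b, 0 ≤ c b) ∧
        x = ∑ b ∈ F, c b • (fun i => ((b i : ℝ)))})
    (σG : Set (Fin n → ℝ))
    (hσG : σG = σ ∩
      (Submodule.span ℝ ((fun b : Fin n → ℤ => fun i => ((b i : ℝ))) '' BG) : Set (Fin n → ℝ)))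
    (hdual : ∀ (s : (Fin n → ℤ) →+ ℤ) (S : (Fin n → ℝ) →ₗ[ℝ] ℝ),
        (∀ b : Fin n → ℤ, S (fun i => (b i : ℝ)) = (s b : ℝ)) →
        (∀ x ∈ σ, 0 ≤ S x) → (∀ x ∈ σG, S x = 0) → s = 0) :
    ∃ f ∈ BG, (fun i => ((f i : ℝ))) ∈ interior σ := by
  let v : F → Fin n → ℚ := fun b i => (b.1 i : ℚ)
  let φ : (Fin n → ℤ) →+ Fin n → ℚ := (Int.castAddHom ℚ).compLeft (Fin n)
  have hrat : ∀ {A : Set (Fin n → ℤ)}, σG ⊆ span ℝ ((fun b i => (b i : ℝ)) '' A) →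
      ∀ {f : Module.Dual ℚ (Fin n → ℚ)}, (∀ b ∈ F, 0 ≤ f fun i => (b i : ℚ)) →
        (∀ a ∈ A, f (fun i => (a i : ℚ)) = 0) → f = 0 := fun hA =>
    Module.Dual.eq_zero_of_forall_intCast fun _ =>
      eq_zero_of_dotProduct_nonneg_of_dotProduct_eq_zero hσ hdual hA
  have hspan : span ℚ (range v) = ⊤ := by
    have hσF := (hσG ▸ inter_subset_left).trans (hσ ▸ setOf_nonneg_sum_smul_subset_span F _)
    refine dualAnnihilator_eq_bot_iff.1 (eq_bot_iff.2 fun f hf => (mem_bot ℚ).2 ?_)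
    have hfF : ∀ b ∈ F, f (fun i => (b i : ℚ)) = 0 := fun b hb =>
      (mem_dualAnnihilator f).1 hf _ (subset_span ⟨⟨b, hb⟩, rfl⟩)
    exact hrat hσF (fun b hb => (hfF b hb).ge) hfF
  obtain ⟨c, hc, hcU⟩ := exists_pos_sum_smul_mem_of_forall_dual v (span ℚ (φ '' BG))
    fun f hf hfv _ => by
      rw [hrat (hσG ▸ inter_subset_right) (fun b hb => hfv ⟨b, hb⟩)
        fun g hg => hf _ (subset_span (mem_image_of_mem φ hg))]
      rfl
  obtain ⟨N, hN, g, hg, hNg⟩ := exists_nat_smul_eq_of_mem_span_rat φ BG hcU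
  refine ⟨g, hg, hσ ▸ intCast_mem_interior_of_sum_smul_eq hspan (c := (N : ℚ) • c)
    (fun b => smul_pos (by exact_mod_cast hN) (hc b)) ?_⟩
  refine Eq.trans ?_ hNg
  simp [v, Finset.smul_sum, smul_smul]
end

section
/- Let G be a group with subgroups Γ, H, K, and K', where K' ⊆ K. Set Γ_H = Γ ∩ H. Let X be a set equipped with an action of Γ, and let Y ⊆ X be a subset stable under Γ_H. For a subgroup L ⊆ G, say that (x₁, g₁), (x₂, g₂) ∈ X × G are L-equivalent if there exist γ ∈ Γ and ℓ ∈ L with x₂ = γ·x₁ and g₂ = γg₁ℓ, and say that (y₁, h₁), (y₂, h₂) ∈ Y × H are (L, H)-equivalent if there exist γ ∈ Γ_H and ℓ ∈ L ∩ H with y₂ = γ·y₁ and h₂ = γh₁ℓ. Assume: (i) any two elements of Y × H that are K-equivalent as elements of X × G are already (K, H)-equivalent; and (ii) for every y ∈ Y and every g ∈ H, the intersection of the stabilizer of y in Γ with gKg⁻¹ is trivial. Then any two elements of Y × H that are K'-equivalent as elements of X × G are (K', H)-equivalent. -/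
/-- Group-theoretic content of the lemma on closed embeddings of Shimura varieties at
deeper level.  `G` is a group with subgroups `Γ, H, K, K'`, `K' ⊆ K`; `X` is a set with
an action of `Γ`, and `Y ⊆ X` is stable under `Γ ∩ H`.  Two pairs in `X × G` are
`L`-equivalent if they differ by some `γ ∈ Γ` on the left and some `ℓ ∈ L` on the right,
and `(L, H)`-equivalent if moreover `γ ∈ H` and `ℓ ∈ H`.
Assume (i) any two elements of `Y × H` that are `K`-equivalent are `(K, H)`-equivalent,
and (ii) for all `y ∈ Y`, `g ∈ H`, the stabilizer of `y` in `Γ` meets `gKg⁻¹` trivially.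
Then any two elements of `Y × H` that are `K'`-equivalent are `(K', H)`-equivalent. -/
theorem shimura_level_injectivity
    {G X : Type*} [Group G] (Γ H K K' : Subgroup G) (hKK' : K' ≤ K)
    [MulAction Γ X] (Y : Set X)
    (hY : ∀ γ : Γ, (γ : G) ∈ H → ∀ y ∈ Y, γ • y ∈ Y)
    (hi : ∀ x₁ ∈ Y, ∀ x₂ ∈ Y, ∀ g₁ ∈ H, ∀ g₂ ∈ H,
      (∃ (γ : Γ) (ℓ : G), ℓ ∈ K ∧ x₂ = γ • x₁ ∧ g₂ = (γ : G) * g₁ * ℓ) →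
      (∃ (γ : Γ) (ℓ : G), (γ : G) ∈ H ∧ ℓ ∈ K ∧ ℓ ∈ H ∧
        x₂ = γ • x₁ ∧ g₂ = (γ : G) * g₁ * ℓ))
    (hii : ∀ y ∈ Y, ∀ g ∈ H, ∀ γ : Γ,
      γ • y = y → (∃ kk ∈ K, (γ : G) = g * kk * g⁻¹) → γ = 1) :
    ∀ x₁ ∈ Y, ∀ x₂ ∈ Y, ∀ g₁ ∈ H, ∀ g₂ ∈ H,
      (∃ (γ : Γ) (ℓ : G), ℓ ∈ K' ∧ x₂ = γ • x₁ ∧ g₂ = (γ : G) * g₁ * ℓ) →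
      (∃ (γ : Γ) (ℓ : G), (γ : G) ∈ H ∧ ℓ ∈ K' ∧ ℓ ∈ H ∧
        x₂ = γ • x₁ ∧ g₂ = (γ : G) * g₁ * ℓ) := by
  rintro x₁ hx₁ x₂ hx₂ g₁ hg₁ g₂ hg₂ ⟨γ, ℓ, hℓ, hx, hg⟩
  obtain ⟨γ', ℓ', hγ'H, hℓ'K, hℓ'H, hx', hg'⟩ :=
    hi x₁ hx₁ x₂ hx₂ g₁ hg₁ g₂ hg₂ ⟨γ, ℓ, hKK' hℓ, hx, hg⟩
  have hfix : (γ'⁻¹ * γ) • x₁ = x₁ := by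
    rw [mul_smul, ← hx, hx', inv_smul_smul]
  have hconj : ((γ'⁻¹ * γ : Γ) : G) = g₁ * (ℓ' * ℓ⁻¹) * g₁⁻¹ := by
    have h1 : (γ : G) * g₁ * ℓ = (γ' : G) * g₁ * ℓ' := by rw [← hg, ← hg']
    push_cast
    group
    rw [show (γ : G) = (γ' : G) * g₁ * ℓ' * ℓ⁻¹ * g₁⁻¹ by rw [← h1]; group]
    group
  have := hii x₁ hx₁ g₁ hg₁ (γ'⁻¹ * γ) hfix
    ⟨ℓ' * ℓ⁻¹, K.mul_mem hℓ'K (K.inv_mem (hKK' hℓ)), hconj⟩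
  have hγeq : γ = γ' := by
    have : γ'⁻¹ * γ = 1 := this
    rw [← mul_left_cancel_iff (a := γ'), mul_one, ← mul_assoc, mul_inv_cancel, one_mul] at this
    exact this
  have hℓeq : ℓ = ℓ' := by
    have h1 : (γ : G) * g₁ * ℓ = (γ : G) * g₁ * ℓ' := by rw [← hg, hγeq, ← hg']
    exact mul_left_cancel h1
  exact ⟨γ', ℓ, hγ'H, hℓ, hℓeq ▸ hℓ'H, hx', by rw [hg, hγeq]⟩
end

section
/- Let V be a free ℤ-module of finite rank and ψ : V × V → ℤ an alternating bilinear form such that ψ♭ : V → V* = Hom(V, ℤ), v ↦ ψ(v, −), is injective with finite cokernel of cardinality d², where d is a positive integer. Let ψ* be the unique bilinear form on V* with ψ*(ψ♭(v), ψ♭(w)) = d²·ψ(v, w) for all v, w ∈ V. Let x, y, z, w ∈ ℤ satisfy x² + y² + z² + w² = d² − 1, and let β ∈ M₄(ℤ) be the matrix with rows (x, −y, −z, −w), (y, x, −w, z), (z, w, x, −y), (w, −z, y, x); let β^T denote its transpose, acting on 4-tuples u = (u₁, u₂, u₃, u₄) ∈ V⁴ by (β^T u)_i = Σ_j (β^T)_{ij}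 u_j. Define a bilinear form ψ' on V' = V⁴ ⊕ (V*)⁴ by ψ'((u, f), (u', f')) = Σ_i ψ(u_i, u'_i) + Σ_i ψ*(f_i, f'_i) − Σ_i f'_i((β^T u)_i) + Σ_i f_i((β^T u')_i). Then ψ' is an alternating bilinear form on V' and it is perfect: the map V' → Hom(V', ℤ), ξ ↦ ψ'(ξ, −), is bijective. -/
/-!
Since `d²` kills the cokernel of `ψ♭`, there is `γ : V* → V` with `ψ♭ γ = γ ψ♭ = d²`, and the
defining property of `ψ*` forces `ψ*(g, ℓ) = -ℓ(γ g)`. Then `ψ'(ξ, -)` is the evaluation pairing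
of `V⁴ × (V*)⁴` against `T ξ ∈ (V*)⁴ × V⁴`, where `T(u, f) = (ψ♭ u + β f, -(γ f + βᵀ u))`; this
pairing is perfect because `V` is reflexive. The map of the same shape with `ψ♭` and `γ`
exchanged is a two-sided inverse of `T`: in the composite the off-diagonal terms cancel and the
diagonal ones are `d² - β βᵀ = d² - βᵀ β = 1`. Alternation reduces to `ψ*(f, f) = -f(γ f) = 0`,
which holds as `d² f(γ f) = ψ(γ f, γ f) = 0`.
-/

open scoped BigOperators Matrix

open Function Module Matrix.Module

theorem LinearMap.exists_comp_eq_card_smul_id_of_injective {R M N : Type*} [CommRing R]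
    [AddCommGroup M] [Module R M] [AddCommGroup N] [Module R N] {f : M →ₗ[R] N}
    (hf : Injective f) :
    ∃ g : N →ₗ[R] M, f ∘ₗ g = (Nat.card (N ⧸ range f) : R) • LinearMap.id ∧
      g ∘ₗ f = (Nat.card (N ⧸ range f) : R) • LinearMap.id := by
  set n := Nat.card (N ⧸ range f)
  have hmem (y : N) : (n : R) • y ∈ range f := by
    rw [← Submodule.Quotient.mk_eq_zero, Submodule.Quotient.mk_smul, Nat.cast_smul_eq_nsmul]
    exact card_nsmul_eq_zero'
  let g := (LinearEquiv.ofInjective f hf).symm.toLinearMap ∘ₗ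
    ((n : R) • LinearMap.id).codRestrict (range f) hmem
  have hfg : f ∘ₗ g = (n : R) • LinearMap.id := by
    ext y
    simp [g]
  refine ⟨g, hfg, LinearMap.ext fun x => hf ?_⟩
  simpa using congr($hfg (f x))

namespace LinearMap.IsAlt

variable {R V : Type*} [CommRing R] [IsDomain R] [AddCommGroup V] [Module R V]
  {ψ : V →ₗ[R] Dual R V} {γ : Dual R V →ₗ[R] V} {c : R}

theorem apply_self_eq_zero_of_comp_eq_smul_id (hψ : ψ.IsAlt) (hc : c ≠ 0)
    (hψγ : ψ ∘ₗ γ = c • LinearMap.id) (ℓ : Dual R V) : ℓ (γ ℓ) = 0 := by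
  have h : c * ℓ (γ ℓ) = 0 := by simpa using congr($hψγ ℓ (γ ℓ)).symm.trans (hψ (γ ℓ))
  exact (mul_eq_zero.mp h).resolve_left hc

theorem dualForm_apply_of_comp_eq_smul_id (hψ : ψ.IsAlt) (hc : c ≠ 0)
    (hψγ : ψ ∘ₗ γ = c • LinearMap.id) {ψs : Dual R V →ₗ[R] Dual R V →ₗ[R] R}
    (hψs : ∀ v w, ψs (ψ v) (ψ w) = c * ψ v w) (g ℓ : Dual R V) : ψs g ℓ = -ℓ (γ g) := by
  have hγ (ℓ : Dual R V) : ψ (γ ℓ) = c • ℓ := congr($hψγ ℓ)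
  refine mul_left_cancel₀ hc (mul_left_cancel₀ hc ?_)
  calc c * (c * ψs g ℓ) = ψs (ψ (γ g)) (ψ (γ ℓ)) := by simp [hγ]
    _ = c * -ψ (γ ℓ) (γ g) := by rw [hψs, hψ.neg]
    _ = c * (c * -ℓ (γ g)) := by simp [hγ]

end LinearMap.IsAlt

section Quaternion

variable {R : Type*} [CommRing R] (x y z w : R)

theorem quaternion_mul_transpose :
    !![x, -y, -z, -w; y, x, -w, z; z, w, x, -y; w, -z, y, x] *
      (!![x, -y, -z, -w; y, x, -w, z; z, w, x, -y; w, -z, y, x])ᵀ =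
      Matrix.scalar (Fin 4) (x ^ 2 + y ^ 2 + z ^ 2 + w ^ 2) := by
  ext i j
  fin_cases i <;> fin_cases j <;> simp [Matrix.mul_apply, Fin.sum_univ_four] <;> ring

theorem quaternion_transpose_mul :
    (!![x, -y, -z, -w; y, x, -w, z; z, w, x, -y; w, -z, y, x])ᵀ *
      !![x, -y, -z, -w; y, x, -w, z; z, w, x, -y; w, -z, y, x] =
      Matrix.scalar (Fin 4) (x ^ 2 + y ^ 2 + z ^ 2 + w ^ 2) := by
  ext i j
  fin_cases i <;> fin_cases j <;> simp [Matrix.mul_apply, Fin.sum_univ_four] <;> ring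

end Quaternion

section ZarhinMap

variable {ι R P Q : Type*} [Fintype ι] [DecidableEq ι] [CommRing R]
  [AddCommGroup P] [Module R P] [AddCommGroup Q] [Module R Q]

def zarhinMap (φ : P →ₗ[R] Q) (γ : Q →ₗ[R] P) (A : Matrix ι ι R) :
    (ι → P) × (ι → Q) →+ (ι → Q) × (ι → P) where
  toFun x := (φ.mapMatrixModule ι x.1 + Aᵀ • x.2, -(γ.mapMatrixModule ι x.2 + A • x.1))
  map_zero' := by simp
  map_add' x x' := by
    simp only [Prod.fst_add, Prod.snd_add, map_add, smul_add, Prod.mk_add_mk]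
    congr 1 <;> abel

theorem zarhinMap_leftInverse {φ : P →ₗ[R] Q} {γ : Q →ₗ[R] P} {A : Matrix ι ι R} {c : R}
    (hγφ : γ ∘ₗ φ = c • LinearMap.id) (hφγ : φ ∘ₗ γ = c • LinearMap.id)
    (hAAt : A * Aᵀ = Matrix.scalar ι (c - 1)) (hAtA : Aᵀ * A = Matrix.scalar ι (c - 1)) :
    LeftInverse (zarhinMap γ φ A) (zarhinMap φ γ A) := by
  rintro ⟨u, f⟩
  have hu : γ.mapMatrixModule ι (φ.mapMatrixModule ι u) = c • u := by
    rw [← LinearMap.mapMatrixModule_comp_apply, hγφ]; ext; simp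
  have hf : φ.mapMatrixModule ι (γ.mapMatrixModule ι f) = c • f := by
    rw [← LinearMap.mapMatrixModule_comp_apply, hφγ]; ext; simp
  simp only [zarhinMap, AddMonoidHom.coe_mk, ZeroHom.coe_mk, map_add, map_neg, map_smul,
    smul_add, smul_neg, smul_smul, hAAt, hAtA, scalar_smul, hu, hf, sub_smul, one_smul]
  refine Prod.ext ?_ ?_ <;> dsimp only <;> abel

end ZarhinMap

section DualProdPairing

variable {ι R V : Type*} [Fintype ι] [CommRing R] [AddCommGroup V] [Module R V]

variable (ι R V) in
def dualProdPairing : ((ι → Dual R V) × (ι → V)) →ₗ[R] ((ι → V) × (ι → Dual R V)) →ₗ[R] R :=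
  LinearMap.mk₂ R (fun c x => ∑ j, c.1 j (x.1 j) + ∑ i, x.2 i (c.2 i))
    (fun _ _ _ => by
      simp only [Prod.fst_add, Prod.snd_add, Pi.add_apply, LinearMap.add_apply, map_add,
        Finset.sum_add_distrib]
      abel)
    (fun _ _ _ => by simp [Finset.mul_sum, mul_add])
    (fun _ _ _ => by
      simp only [Prod.fst_add, Prod.snd_add, Pi.add_apply, LinearMap.add_apply, map_add,
        Finset.sum_add_distrib]
      abel)
    (fun _ _ _ => by simp [Finset.mul_sum, mul_add])

theorem dualProdPairing_apply (c : (ι → Dual R V) × (ι → V)) (x : (ι → V) × (ι → Dual R V)) :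
    dualProdPairing ι R V c x = ∑ j, c.1 j (x.1 j) + ∑ i, x.2 i (c.2 i) := rfl

variable [DecidableEq ι]

@[simp]
theorem dualProdPairing_apply_inl_single (c : (ι → Dual R V) × (ι → V)) (j : ι) (v : V) :
    dualProdPairing ι R V c (Pi.single j v, 0) = c.1 j v := by
  simp only [dualProdPairing_apply, Pi.zero_apply, LinearMap.zero_apply, Finset.sum_const_zero,
    add_zero]
  rw [Fintype.sum_eq_single j fun k hk => by simp [hk]]
  simp

@[simp]
theorem dualProdPairing_apply_inr_single (c : (ι → Dual R V) × (ι → V)) (i : ι)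
    (ℓ : Dual R V) : dualProdPairing ι R V c (0, Pi.single i ℓ) = ℓ (c.2 i) := by
  simp only [dualProdPairing_apply, Pi.zero_apply, map_zero, Finset.sum_const_zero, zero_add]
  rw [Fintype.sum_eq_single i fun k hk => by simp [hk]]
  simp

variable (ι R V) in
theorem dualProdPairing_bijective [IsReflexive R V] : Bijective (dualProdPairing ι R V) := by
  constructor
  · intro c c' h
    refine Prod.ext (funext fun j => LinearMap.ext fun v => ?_)
      (funext fun i => (evalEquiv R V).injective (LinearMap.ext fun ℓ => ?_))
    · simpa using congr($h (Pi.single j v, 0))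
    · simpa using congr($h (0, Pi.single i ℓ))
  · intro φ
    refine ⟨(fun j => φ ∘ₗ LinearMap.inl R _ _ ∘ₗ LinearMap.single R (fun _ => V) j,
      fun i => (evalEquiv R V).symm
        (φ ∘ₗ LinearMap.inr R _ _ ∘ₗ LinearMap.single R (fun _ => Dual R V) i)), ?_⟩
    ext j v <;> simp

theorem zarhinForm_eq_dualProdPairing (ψ : V →ₗ[R] Dual R V) (γ : Dual R V →ₗ[R] V)
    {ψs : Dual R V →ₗ[R] Dual R V →ₗ[R] R} (hψs : ∀ g ℓ, ψs g ℓ = -ℓ (γ g))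
    (B : Matrix ι ι R) (u u' : ι → V) (f f' : ι → Dual R V) :
    (∑ i, ψ (u i) (u' i)) + (∑ i, ψs (f i) (f' i)) - (∑ i, f' i (∑ j, B i j • u j))
        + (∑ i, f i (∑ j, B i j • u' j)) =
      dualProdPairing ι R V (zarhinMap ψ γ B (u, f)) (u', f') := by
  simp only [dualProdPairing_apply, zarhinMap, AddMonoidHom.coe_mk, ZeroHom.coe_mk, hψs,
    Pi.add_apply, Pi.neg_apply, Pi.smul_apply, comp_apply, Matrix.Module.smul_apply,
    Matrix.transpose_apply, LinearMap.mapMatrixModule_apply, LinearMap.compLeft_apply,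
    LinearMap.add_apply, LinearMap.coe_sum, LinearMap.coe_smul, Finset.sum_apply, map_add,
    map_neg, map_sum, map_smul, smul_eq_mul, neg_add_rev, Finset.sum_add_distrib,
    Finset.sum_neg_distrib]
  rw [Finset.sum_comm (f := fun i j => B j i * f j (u' i))]
  ring

end DualProdPairing

theorem zarhin_form_perfect_alternating_general
    (V : Type*) [AddCommGroup V] [Module ℤ V] [Module.Free ℤ V] [Module.Finite ℤ V]
    (ψ : V →ₗ[ℤ] V →ₗ[ℤ] ℤ) (halt : ∀ v, ψ v v = 0)
    (hinj : Function.Injective ψ)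
    (d : ℕ)
    (hcoker : Nat.card ((V →ₗ[ℤ] ℤ) ⧸ LinearMap.range ψ) = d ^ 2)
    (ψs : (V →ₗ[ℤ] ℤ) →ₗ[ℤ] (V →ₗ[ℤ] ℤ) →ₗ[ℤ] ℤ)
    (hψs : ∀ v w : V, ψs (ψ v) (ψ w) = (d : ℤ) ^ 2 * ψ v w)
    (x y z w : ℤ) (hxyzw : x ^ 2 + y ^ 2 + z ^ 2 + w ^ 2 = (d : ℤ) ^ 2 - 1)
    (β : Matrix (Fin 4) (Fin 4) ℤ)
    (hβ : β = !![x, -y, -z, -w; y, x, -w, z; z, w, x, -y; w, -z, y, x])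
    (Ψ : ((Fin 4 → V) × (Fin 4 → (V →ₗ[ℤ] ℤ))) →
         ((Fin 4 → V) × (Fin 4 → (V →ₗ[ℤ] ℤ))) → ℤ)
    (hΨ : ∀ (u u' : Fin 4 → V) (f f' : Fin 4 → (V →ₗ[ℤ] ℤ)),
      Ψ (u, f) (u', f') =
        (∑ i, ψ (u i) (u' i)) + (∑ i, ψs (f i) (f' i))
          - (∑ i, f' i (∑ j, β.transpose i j • u j))
          + (∑ i, f i (∑ j, β.transpose i j • u' j))) :
    (∀ a b c, Ψ (a + b) c = Ψ a c + Ψ b c) ∧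
    (∀ a b c, Ψ c (a + b) = Ψ c a + Ψ c b) ∧
    (∀ a, Ψ a a = 0) ∧
    (∀ a, (∀ b, Ψ a b = 0) → a = 0) ∧
    (∀ φ : ((Fin 4 → V) × (Fin 4 → (V →ₗ[ℤ] ℤ))) →+ ℤ, ∃ a, ∀ b, Ψ a b = φ b) := by
  -- the `•` in `hΨ` is the canonical `zsmul`, and a `ℤ`-module structure is unique
  obtain rfl : ‹Module ℤ V› = AddCommGroup.toIntModule V := Subsingleton.elim _ _
  have hd : (d : ℤ) ^ 2 ≠ 0 := fun h => by
    linarith [sq_nonneg x, sq_nonneg y, sq_nonneg z, sq_nonneg w]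
  obtain ⟨γ, hψγ, hγψ⟩ := LinearMap.exists_comp_eq_card_smul_id_of_injective hinj
  rw [hcoker, Nat.cast_pow] at hψγ hγψ
  have hψs' := LinearMap.IsAlt.dualForm_apply_of_comp_eq_smul_id halt hd hψγ hψs
  have hAAt : βᵀ * (βᵀ)ᵀ = Matrix.scalar (Fin 4) ((d : ℤ) ^ 2 - 1) := by
    rw [Matrix.transpose_transpose, hβ, quaternion_transpose_mul, hxyzw]
  have hAtA : (βᵀ)ᵀ * βᵀ = Matrix.scalar (Fin 4) ((d : ℤ) ^ 2 - 1) := by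
    rw [Matrix.transpose_transpose, hβ, quaternion_mul_transpose, hxyzw]
  set T := zarhinMap ψ γ βᵀ
  have hT : Bijective T :=
    ⟨(zarhinMap_leftInverse hγψ hψγ hAAt hAtA).injective,
      (zarhinMap_leftInverse hψγ hγψ hAAt hAtA).surjective⟩
  have hΨT (a b) : Ψ a b = dualProdPairing (Fin 4) ℤ V (T a) b := by
    obtain ⟨u, f⟩ := a
    obtain ⟨u', f'⟩ := b
    rw [hΨ]
    exact zarhinForm_eq_dualProdPairing ψ γ hψs' βᵀ u u' f f'
  refine ⟨fun a b c => ?_, fun a b c => ?_, ?_, fun a ha => ?_, fun φ => ?_⟩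
  · simp only [hΨT, map_add, LinearMap.add_apply]
  · simp only [hΨT, map_add]
  · rintro ⟨u, f⟩
    simp [hΨ, halt, hψs', LinearMap.IsAlt.apply_self_eq_zero_of_comp_eq_smul_id halt hd hψγ]
  · refine hT.injective <|
      (dualProdPairing_bijective (Fin 4) ℤ V).injective (LinearMap.ext fun b => ?_)
    rw [map_zero, map_zero, LinearMap.zero_apply, ← hΨT, ha]
  · obtain ⟨c, hc⟩ := (dualProdPairing_bijective (Fin 4) ℤ V).surjective φ.toIntLinearMap
    obtain ⟨a, rfl⟩ := hT.surjective c
    exact ⟨a, fun b => (hΨT a b).trans congr($hc b)⟩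

/-- **Zarhin's trick.**  Let `V` be a finite free `ℤ`-module with an alternating form `ψ`
whose associated map `ψ♭ : V → V*` is injective with cokernel of cardinality `d²`, and let
`ψ*` be the unique bilinear form on `V*` with `ψ*(ψ♭v, ψ♭w) = d²·ψ(v, w)`.  Given integers
`x² + y² + z² + w² = d² − 1` and the quaternion matrix `β`, the form `ψ'` on
`V' = V⁴ ⊕ (V*)⁴` defined by
`ψ'((u,f),(u',f')) = Σ ψ(uᵢ,u'ᵢ) + Σ ψ*(fᵢ,f'ᵢ) − Σ f'ᵢ((βᵀu)ᵢ) + Σ fᵢ((βᵀu')ᵢ)`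
is an alternating bilinear form and it is perfect: `ξ ↦ ψ'(ξ, −)` is a bijection onto
`Hom(V', ℤ)`. -/
theorem zarhin_form_perfect_alternating
    (V : Type*) [AddCommGroup V] [Module ℤ V] [Module.Free ℤ V] [Module.Finite ℤ V]
    (ψ : V →ₗ[ℤ] V →ₗ[ℤ] ℤ) (halt : ∀ v, ψ v v = 0)
    (hinj : Function.Injective ψ)
    (d : ℕ) (hd : 0 < d)
    (hcoker : Nat.card ((V →ₗ[ℤ] ℤ) ⧸ LinearMap.range ψ) = d ^ 2)
    (ψs : (V →ₗ[ℤ] ℤ) →ₗ[ℤ] (V →ₗ[ℤ] ℤ) →ₗ[ℤ] ℤ)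
    (hψs : ∀ v w : V, ψs (ψ v) (ψ w) = (d : ℤ) ^ 2 * ψ v w)
    (x y z w : ℤ) (hxyzw : x ^ 2 + y ^ 2 + z ^ 2 + w ^ 2 = (d : ℤ) ^ 2 - 1)
    (β : Matrix (Fin 4) (Fin 4) ℤ)
    (hβ : β = !![x, -y, -z, -w; y, x, -w, z; z, w, x, -y; w, -z, y, x])
    (Ψ : ((Fin 4 → V) × (Fin 4 → (V →ₗ[ℤ] ℤ))) →
         ((Fin 4 → V) × (Fin 4 → (V →ₗ[ℤ] ℤ))) → ℤ)
    (hΨ : ∀ (u u' : Fin 4 → V) (f f' : Fin 4 → (V →ₗ[ℤ] ℤ)),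
      Ψ (u, f) (u', f') =
        (∑ i, ψ (u i) (u' i)) + (∑ i, ψs (f i) (f' i))
          - (∑ i, f' i (∑ j, β.transpose i j • u j))
          + (∑ i, f i (∑ j, β.transpose i j • u' j))) :
    (∀ a b c, Ψ (a + b) c = Ψ a c + Ψ b c) ∧
    (∀ a b c, Ψ c (a + b) = Ψ c a + Ψ c b) ∧
    (∀ a, Ψ a a = 0) ∧
    (∀ a, (∀ b, Ψ a b = 0) → a = 0) ∧
    (∀ φ : ((Fin 4 → V) × (Fin 4 → (V →ₗ[ℤ] ℤ))) →+ ℤ, ∃ a, ∀ b, Ψ a b = φ b) :=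
  zarhin_form_perfect_alternating_general V ψ halt hinj d hcoker ψs hψs x y z w hxyzw β hβ Ψ hΨ
end
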